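/- arXiv:1609.06031 — 2 statements merged into one kernel-verified Lean document; each statement's English description precedes it below -/
import Mathlib

section
/- Let Z_1,…,Z_r be i.i.d. standard normal random variables, let μ = (μ_1,…,μ_r) ∈ ℝ^r with λ = ‖μ‖² > 0, and set W = Σ_{i=1}^r (Z_i + μ_i)² (so W has a non-central chi-square distribution with r degrees of freedom and non-centrality parameter λ). Then for every t ∈ ℝ, P(W > t) ≤ P(Σ_{i=1}^r Z_i² > (t−λ)/2) + P(Z > (t−λ)/(4√λ)), where Z is a standard normal random variable. -/
open MeasureTheory ProbabilityTheory Matrix Filter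
open scoped ENNReal NNReal Topology BigOperators

noncomputable section

/-- The submatrix of `X` consisting of the columns indexed by the model `α`. -/
def colSub {n p : ℕ} (X : Matrix (Fin n) (Fin p) ℝ) (α : Finset (Fin p)) :
    Matrix (Fin n) {j // j ∈ α} ℝ :=
  X.submatrix id (fun j => j.1)

/-- The Gram matrix `X_α' X_α` of the model `α`. -/
def gram {n p : ℕ} (X : Matrix (Fin n) (Fin p) ℝ) (α : Finset (Fin p)) :
    Matrix {j // j ∈ α} {j // j ∈ α} ℝ :=
  (colSub X α)ᵀ * colSub X α

/-- The rank `r_α = rank (X_α' X_α)` of the model `α`. -/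
def rk {n p : ℕ} (X : Matrix (Fin n) (Fin p) ℝ) (α : Finset (Fin p)) : ℕ :=
  (gram X α).rank

/-- The residual sum of squares `R²_α = y'(I − P_n(α))y`, characterized as the minimal
squared distance of `y` from the column span of `X_α`. -/
def R2 {n p : ℕ} (X : Matrix (Fin n) (Fin p) ℝ) (α : Finset (Fin p)) (y : Fin n → ℝ) : ℝ :=
  ⨅ b : {j // j ∈ α} → ℝ, (y - colSub X α *ᵥ b) ⬝ᵥ (y - colSub X α *ᵥ b)

/-- `R²*_α = y'(I − X_α (I/g + X_α'X_α)⁻¹ X_α') y`. -/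
def R2star {n p : ℕ} (g : ℝ) (X : Matrix (Fin n) (Fin p) ℝ) (α : Finset (Fin p))
    (y : Fin n → ℝ) : ℝ :=
  y ⬝ᵥ ((1 - colSub X α *
      (g⁻¹ • (1 : Matrix {j // j ∈ α} {j // j ∈ α} ℝ) + gram X α)⁻¹ * (colSub X α)ᵀ) *ᵥ y)

/-- The distribution of the error vector: `n` iid `N(0, σ²)` coordinates. -/
def gaussErr (n : ℕ) (σ2 : ℝ≥0) : Measure (Fin n → ℝ) :=
  Measure.pi fun _ => gaussianReal 0 σ2

/-- `φ` is a nonzero eigenvalue of `A`. -/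
def IsNzEigen {m : Type*} [Fintype m] (A : Matrix m m ℝ) (φ : ℝ) : Prop :=
  φ ≠ 0 ∧ ∃ v : m → ℝ, v ≠ 0 ∧ A *ᵥ v = φ • v

/-- `τ` is the largest nonzero eigenvalue of `A`. -/
def IsMaxNzEigen {m : Type*} [Fintype m] (A : Matrix m m ℝ) (τ : ℝ) : Prop :=
  IsNzEigen A τ ∧ ∀ φ, IsNzEigen A φ → φ ≤ τ

/-- `τ` is the smallest nonzero eigenvalue of `A`. -/
def IsMinNzEigen {m : Type*} [Fintype m] (A : Matrix m m ℝ) (τ : ℝ) : Prop :=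
  IsNzEigen A τ ∧ ∀ φ, IsNzEigen A φ → τ ≤ φ

/-- The unnormalized posterior weight of model `α` (known error variance `σ2`):
`(p−1)^{−|α|} det(I + g X_α'X_α)^{−1/2} exp(−R²*_α/(2σ²))`. -/
def postWeight {n p : ℕ} (g σ2 : ℝ) (X : Matrix (Fin n) (Fin p) ℝ) (α : Finset (Fin p))
    (y : Fin n → ℝ) : ℝ :=
  ((p : ℝ) - 1)⁻¹ ^ α.card * (Real.sqrt ((1 + g • gram X α).det))⁻¹ *
    Real.exp (-R2star g X α y / (2 * σ2))

/-- The unnormalized posterior weight of model `α` (unknown error variance, Jeffreys prior):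
`(p−1)^{−|α|} det(I + g X_α'X_α)^{−1/2} (R²*_α)^{−n/2}`. -/
def postWeightU {n p : ℕ} (g : ℝ) (X : Matrix (Fin n) (Fin p) ℝ) (α : Finset (Fin p))
    (y : Fin n → ℝ) : ℝ :=
  ((p : ℝ) - 1)⁻¹ ^ α.card * (Real.sqrt ((1 + g • gram X α).det))⁻¹ *
    R2star g X α y ^ (-(n : ℝ) / 2)

/-!
Expanding `‖z + μ‖² = ‖z‖² + 2⟪μ, z⟫ + λ`, the event `‖z + μ‖² > t` forces `‖z‖² > (t - λ)/2` or
`⟪μ, z⟫ > (t - λ)/4`, and the union bound applies. Under the standard Gaussian measure the linear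
form `⟪μ, z⟫` has law `N(0, λ)`, so after rescaling by `√λ` its tail is that of a standard normal
at `(t - λ)/(4√λ)`.
-/

lemma map_pi_gaussianReal_dotProduct {ι : Type*} [Fintype ι] (μ : ι → ℝ) :
    (Measure.pi fun _ : ι => gaussianReal 0 1).map (μ ⬝ᵥ ·)
      = gaussianReal 0 (μ ⬝ᵥ μ).toNNReal := by
  set L : StrongDual ℝ (EuclideanSpace ℝ ι) := innerSL ℝ (WithLp.toLp 2 μ)
  have hL : (μ ⬝ᵥ ·) = L ∘ WithLp.toLp 2 := by
    ext z
    simp [L, dotProduct, PiLp.inner_apply, mul_comm]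
  rw [hL, ← Measure.map_map L.continuous.measurable (by fun_prop), map_pi_eq_stdGaussian,
    IsGaussian.map_eq_gaussianReal, integral_strongDual_stdGaussian, variance_dual_stdGaussian,
    innerSL_apply_norm, EuclideanSpace.real_norm_sq_eq]
  simp [dotProduct, sq]

lemma gaussianReal_Ioi_eq_Ioi_div_sqrt {v : ℝ≥0} (hv : v ≠ 0) (a : ℝ) :
    gaussianReal 0 v (Set.Ioi a) = gaussianReal 0 1 (Set.Ioi (a / √v)) := by
  have hs : 0 < √(v : ℝ) := by positivity
  have hstd : (gaussianReal 0 v).map (· / √v) = gaussianReal 0 1 := by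
    rw [gaussianReal_map_div_const]
    congr 1
    · simp
    · ext; simp [hv]
  rw [← hstd, Measure.map_apply (by fun_prop) measurableSet_Ioi]
  congr 1
  ext x
  simp [div_lt_div_iff_of_pos_right hs]

lemma sum_add_sq_eq {ι : Type*} [Fintype ι] (z μ : ι → ℝ) :
    ∑ i, (z i + μ i) ^ 2 = ∑ i, z i ^ 2 + 2 * (μ ⬝ᵥ z) + μ ⬝ᵥ μ := by
  simp only [dotProduct, Finset.mul_sum, ← Finset.sum_add_distrib]
  exact Finset.sum_congr rfl fun i _ => by ring

lemma setOf_lt_sum_add_sq_subset {ι : Type*} [Fintype ι] (μ : ι → ℝ) (t : ℝ) :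
    {z : ι → ℝ | t < ∑ i, (z i + μ i) ^ 2}
      ⊆ {z | (t - μ ⬝ᵥ μ) / 2 < ∑ i, z i ^ 2} ∪ {z | (t - μ ⬝ᵥ μ) / 4 < μ ⬝ᵥ z} := by
  intro z hz
  by_contra! h
  simp only [Set.mem_union, Set.mem_ofPred_eq, not_or, not_lt] at hz h
  rw [sum_add_sq_eq] at hz
  linarith [h.1, h.2]

/-- **Lemma 2.** Tail bound for the non-central chi-square distribution: if
`W = Σᵢ (Zᵢ + μᵢ)²` with `Z₁,…,Z_r` iid standard normal and `λ = ‖μ‖² > 0`, then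
`P(W > t) ≤ P(χ²_r > (t−λ)/2) + P(Z > (t−λ)/(4√λ))`. -/
theorem noncentral_chisq_tail_bound
    (r : ℕ) (μv : Fin r → ℝ) (hlam : 0 < μv ⬝ᵥ μv) (t : ℝ) :
    (Measure.pi fun _ : Fin r => gaussianReal 0 1)
        {z | t < ∑ i, (z i + μv i) ^ 2}
      ≤ (Measure.pi fun _ : Fin r => gaussianReal 0 1)
          {z | (t - μv ⬝ᵥ μv) / 2 < ∑ i, z i ^ 2}
        + gaussianReal 0 1 {x | (t - μv ⬝ᵥ μv) / (4 * Real.sqrt (μv ⬝ᵥ μv)) < x} := by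
  set γ := Measure.pi fun _ : Fin r => gaussianReal 0 1
  have hlinear : γ {z | (t - μv ⬝ᵥ μv) / 4 < μv ⬝ᵥ z}
      = gaussianReal 0 1 {x | (t - μv ⬝ᵥ μv) / (4 * Real.sqrt (μv ⬝ᵥ μv)) < x} := by
    change γ ((μv ⬝ᵥ ·) ⁻¹' Set.Ioi _) = gaussianReal 0 1 (Set.Ioi _)
    rw [← Measure.map_apply (by fun_prop) measurableSet_Ioi, map_pi_gaussianReal_dotProduct,
      gaussianReal_Ioi_eq_Ioi_div_sqrt (by simpa using hlam), Real.coe_toNNReal _ hlam.le,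
      div_div]
  calc γ {z | t < ∑ i, (z i + μv i) ^ 2}
      ≤ γ ({z | (t - μv ⬝ᵥ μv) / 2 < ∑ i, z i ^ 2} ∪ {z | (t - μv ⬝ᵥ μv) / 4 < μv ⬝ᵥ z}) :=
        measure_mono (setOf_lt_sum_add_sq_subset μv t)
    _ ≤ _ := measure_union_le _ _
    _ = _ := by rw [hlinear]
end
end

section
/- (Closed form of the marginal likelihood under the conjugate Gaussian prior.) Let y ∈ ℝⁿ, let X be an n×k real matrix, and let σ² > 0, g > 0. Then ∫_{ℝ^k} (2πσ²)^{−n/2} exp(−‖y − Xβ‖²/(2σ²)) · (2πgσ²)^{−k/2} exp(−‖β‖²/(2gσ²)) dβ = (2πσ²)^{−n/2} det(I_k + g X'X)^{−1/2} exp(−R²*/(2σ²)), where R²* = y'( I_n − X (I_k/g + X'X)^{−1} X' ) y. -/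
/-!
Completing the square in `β`: with `A = I/g + X'X` and `μ = A⁻¹X'y`,
`‖y - Xβ‖² + ‖β‖²/g = (β - μ)'A(β - μ) + R²*`. What remains is a Gaussian integral with
precision matrix `A/σ² = (I + gX'X)/(gσ²)`. Writing the positive definite `I + gX'X` as
`B'B` and substituting `v = Bβ` evaluates it as `(2πgσ²)^{k/2} det(I + gX'X)^{-1/2}`, and the
power of `2πgσ²` cancels the normalizing constant of the prior.
-/

open MeasureTheory ProbabilityTheory Matrix Filter
open scoped ENNReal NNReal Topology BigOperators

noncomputable section

open Real

section GaussianIntegral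

variable {ι : Type*} [Fintype ι]

-- No sign condition on `b`: for `b ≤ 0` and `ι` nonempty both sides are the junk value `0`.
theorem integral_exp_neg_mul_dotProduct_self (b : ℝ) :
    ∫ x : ι → ℝ, exp (-b * (x ⬝ᵥ x)) = √(π / b) ^ Fintype.card ι := by
  have hprod (x : ι → ℝ) : exp (-b * (x ⬝ᵥ x)) = ∏ i, exp (-b * x i ^ 2) := by
    simp only [← exp_sum, dotProduct, Finset.mul_sum, sq]
  simp_rw [hprod]
  rw [volume_pi, integral_fintype_prod_eq_pow (fun x : ℝ => exp (-b * x ^ 2)), integral_gaussian]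

variable [DecidableEq ι]

theorem integral_comp_mulVec {E : Type*} [NormedAddCommGroup E] [NormedSpace ℝ E]
    {S : Matrix ι ι ℝ} (hS : S.det ≠ 0) (f : (ι → ℝ) → E) :
    ∫ x, f (S *ᵥ x) = |S.det|⁻¹ • ∫ x, f x := by
  have hinj : Function.Injective (toLin' S) :=
    mulVec_injective_iff_isUnit.mpr ((isUnit_iff_isUnit_det S).mpr hS.isUnit)
  have hemb : MeasurableEmbedding (toLin' S) :=
    (LinearMap.isClosedEmbedding_of_injective (LinearMap.ker_eq_bot.mpr hinj)).measurableEmbedding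
  change ∫ x, f (toLin' S x) = _
  rw [← hemb.integral_map, map_matrix_volume_pi_eq_smul_volume_pi hS, integral_smul_measure,
    ENNReal.toReal_ofReal (abs_nonneg _), abs_inv]

theorem Matrix.PosDef.integral_exp_neg_mul_dotProduct_mulVec {A : Matrix ι ι ℝ} (hA : A.PosDef)
    (b : ℝ) (μ : ι → ℝ) :
    ∫ x, exp (-b * ((x - μ) ⬝ᵥ A *ᵥ (x - μ))) =
      √(π / b) ^ Fintype.card ι / √A.det := by
  open scoped MatrixOrder in
  obtain ⟨B, rfl⟩ := CStarAlgebra.nonneg_iff_eq_star_mul_self.mp hA.posSemidef.nonneg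
  rw [star_eq_conjTranspose, conjTranspose_eq_transpose_of_trivial] at hA ⊢
  have hdet : (Bᵀ * B).det = B.det * B.det := by rw [det_mul, det_transpose]
  have hB : B.det ≠ 0 := fun h => hA.det_pos.ne' (by rw [hdet, h, mul_zero])
  have hquad (x : ι → ℝ) : x ⬝ᵥ (Bᵀ * B) *ᵥ x = B *ᵥ x ⬝ᵥ B *ᵥ x := by
    rw [← mulVec_mulVec, dotProduct_transpose_mulVec, dotProduct_comm]
  rw [integral_sub_right_eq_self (fun x => exp (-b * (x ⬝ᵥ (Bᵀ * B) *ᵥ x))) μ]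
  simp_rw [hquad]
  rw [integral_comp_mulVec hB (fun v => exp (-b * (v ⬝ᵥ v))),
    integral_exp_neg_mul_dotProduct_self, hdet, sqrt_mul_self_eq_abs, smul_eq_mul, inv_mul_eq_div]

end GaussianIntegral

theorem residual_dotProduct_add_eq_complete_square {R m ι : Type*} [CommRing R]
    [Fintype m] [Fintype ι] [DecidableEq m] [DecidableEq ι] (y : m → R) (X : Matrix m ι R)
    {A : Matrix ι ι R} (hA : Aᵀ = A) (hdet : IsUnit A.det) (b : ι → R) :
    (y - X *ᵥ b) ⬝ᵥ (y - X *ᵥ b) + b ⬝ᵥ (A - Xᵀ * X) *ᵥ b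
      = (b - A⁻¹ *ᵥ Xᵀ *ᵥ y) ⬝ᵥ A *ᵥ (b - A⁻¹ *ᵥ Xᵀ *ᵥ y)
        + y ⬝ᵥ (1 - X * A⁻¹ * Xᵀ) *ᵥ y := by
  set μ := A⁻¹ *ᵥ Xᵀ *ᵥ y
  have hAμ : A *ᵥ μ = Xᵀ *ᵥ y := by rw [mulVec_mulVec, mul_nonsing_inv A hdet, one_mulVec]
  have hyX (v : ι → R) : y ⬝ᵥ X *ᵥ v = v ⬝ᵥ Xᵀ *ᵥ y :=
    (dotProduct_transpose_mulVec X v y).symm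
  have hXX : X *ᵥ b ⬝ᵥ X *ᵥ b = b ⬝ᵥ (Xᵀ * X) *ᵥ b := by
    rw [← mulVec_mulVec, dotProduct_transpose_mulVec, dotProduct_comm]
  have hμA : μ ⬝ᵥ A *ᵥ b = b ⬝ᵥ Xᵀ *ᵥ y := by
    rw [← hAμ, ← dotProduct_transpose_mulVec, hA]
  have hproj : (X * A⁻¹ * Xᵀ) *ᵥ y = X *ᵥ μ := by
    simp only [μ, mulVec_mulVec, Matrix.mul_assoc]
  simp only [sub_dotProduct, dotProduct_sub, mulVec_sub, sub_mulVec, one_mulVec, hproj, hAμ, hyX,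
    dotProduct_comm (X *ᵥ b) y, hXX, hμA]
  ring

theorem rpow_neg_natCast_div_two {x : ℝ} (hx : 0 ≤ x) (k : ℕ) :
    x ^ (-(k : ℝ) / 2) = (√x ^ k)⁻¹ := by
  rw [neg_div, rpow_neg hx, sqrt_eq_rpow, ← rpow_natCast, ← rpow_mul hx]
  ring_nf

/-- **Closed form of the marginal likelihood under the conjugate Gaussian prior.**
`∫ (2πσ²)^{−n/2} e^{−‖y−Xβ‖²/(2σ²)} (2πgσ²)^{−k/2} e^{−‖β‖²/(2gσ²)} dβ
  = (2πσ²)^{−n/2} det(I + gX'X)^{−1/2} e^{−R²*/(2σ²)}`. -/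
theorem marginal_likelihood_closed_form
    {n k : ℕ} (y : Fin n → ℝ) (X : Matrix (Fin n) (Fin k) ℝ) (σ2 g : ℝ)
    (hσ2 : 0 < σ2) (hg : 0 < g) :
    (∫ b : Fin k → ℝ,
        (2 * Real.pi * σ2) ^ (-(n : ℝ) / 2) *
          Real.exp (-((y - X *ᵥ b) ⬝ᵥ (y - X *ᵥ b)) / (2 * σ2)) *
        ((2 * Real.pi * (g * σ2)) ^ (-(k : ℝ) / 2) *
          Real.exp (-(b ⬝ᵥ b) / (2 * (g * σ2)))))
      = (2 * Real.pi * σ2) ^ (-(n : ℝ) / 2) *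
          (Real.sqrt ((1 + g • (Xᵀ * X)).det))⁻¹ *
          Real.exp (-(y ⬝ᵥ ((1 - X * (g⁻¹ • (1 : Matrix (Fin k) (Fin k) ℝ) + Xᵀ * X)⁻¹ * Xᵀ) *ᵥ y))
            / (2 * σ2)) := by
  set A : Matrix (Fin k) (Fin k) ℝ := g⁻¹ • 1 + Xᵀ * X
  have hA : A.PosDef := (PosDef.one.smul (inv_pos.2 hg)).add_posSemidef
    (by simpa using posSemidef_conjTranspose_mul_self X)
  have hgA : 1 + g • (Xᵀ * X) = g • A := by
    rw [smul_add, smul_smul, mul_inv_cancel₀ hg.ne', one_smul]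
  have hsq (b : Fin k → ℝ) := residual_dotProduct_add_eq_complete_square y X
    (by simpa using hA.isHermitian.eq) hA.det_pos.ne'.isUnit b
  set μ := A⁻¹ *ᵥ Xᵀ *ᵥ y
  set R := y ⬝ᵥ (1 - X * A⁻¹ * Xᵀ) *ᵥ y
  have hintegrand (b : Fin k → ℝ) :
      exp (-((y - X *ᵥ b) ⬝ᵥ (y - X *ᵥ b)) / (2 * σ2)) * exp (-(b ⬝ᵥ b) / (2 * (g * σ2))) =
        exp (-R / (2 * σ2)) * exp (-(2 * (g * σ2))⁻¹ * ((b - μ) ⬝ᵥ (g • A) *ᵥ (b - μ))) := by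
    have hb := hsq b
    rw [add_sub_cancel_right, smul_mulVec, one_mulVec, dotProduct_smul, smul_eq_mul] at hb
    rw [← exp_add, ← exp_add, smul_mulVec, dotProduct_smul, smul_eq_mul]
    congr 1
    field_simp at hb ⊢
    linear_combination -hb
  simp_rw [mul_mul_mul_comm _ (exp _), hintegrand]
  rw [integral_const_mul, integral_const_mul,
    (hA.smul hg).integral_exp_neg_mul_dotProduct_mulVec, Fintype.card_fin, ← hgA,
    rpow_neg_natCast_div_two (x := 2 * π * (g * σ2)) (by positivity), div_inv_eq_mul,
    show π * (2 * (g * σ2)) = 2 * π * (g * σ2) by ring]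
  field_simp
end
end
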